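/- arXiv:1903.10313 — 5 statements merged into one kernel-verified Lean document; each statement's English description precedes it below -/
import Mathlib

section
/- Let A be an n×n matrix over a field (take the complex numbers), with eigenvalues λ₁,…,λₙ. Let X be an n×r matrix (r < n) with rank(X) = r whose i-th column xᵢ satisfies Axᵢ = λᵢxᵢ for i = 1,…,r, let Ω = diag(λ₁,…,λ_r), and let C be an arbitrary r×n matrix. Then the characteristic polynomials satisfy charpoly(A + XC) · charpoly(Ω) = charpoly(A) · charpoly(Ω + CX); equivalently, the eigenvalue multiset of A + XC is {μ₁,…,μ_r, λ_{r+1},…,λₙ}, where μ₁,…,μ_r are the eigenvalues of Ω + CX. -/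
open Matrix Polynomial

lemma eval_charpoly_aux {k : ℕ} (M : Matrix (Fin k) (Fin k) ℂ) (t : ℂ) :
    M.charpoly.eval t = (t • (1 : Matrix (Fin k) (Fin k) ℂ) - M).det := by
  rw [Matrix.charpoly, ← Polynomial.coe_evalRingHom, RingHom.map_det]
  congr 1
  ext i j
  by_cases h : i = j
  · subst h
    simp [Matrix.charmatrix_apply_eq, Matrix.smul_apply, Matrix.one_apply]
  · simp [Matrix.charmatrix_apply_ne _ _ _ h, Matrix.one_apply_ne h, Matrix.smul_apply]

/-- **Rado's theorem** (rank-r perturbation): if the columns of `X` are eigenvectors of `A`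
for the eigenvalues `λ₁, …, λ_r`, then perturbing `A` by `X * C` replaces the eigenvalues
`λ₁, …, λ_r` by the eigenvalues of `Ω + C * X`, where `Ω = diag(λ₁, …, λ_r)`;
expressed via the characteristic-polynomial identity
`charpoly (A + X*C) * charpoly Ω = charpoly A * charpoly (Ω + C*X)`. -/
theorem rado_perturbation {n r : ℕ} (hr : r < n)
    (A : Matrix (Fin n) (Fin n) ℂ) (lam : Fin n → ℂ)
    (heig : A.charpoly.roots = Finset.univ.val.map lam)
    (X : Matrix (Fin n) (Fin r) ℂ)
    (hX : ∀ i : Fin r,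
      A.mulVec (fun j => X j i) = lam (Fin.castLE hr.le i) • (fun j => X j i))
    (hrank : X.rank = r)
    (C : Matrix (Fin r) (Fin n) ℂ) :
    (A + X * C).charpoly *
        (Matrix.diagonal (fun i : Fin r => lam (Fin.castLE hr.le i))).charpoly
      = A.charpoly *
        (Matrix.diagonal (fun i : Fin r => lam (Fin.castLE hr.le i)) + C * X).charpoly := by
  set Ω : Matrix (Fin r) (Fin r) ℂ :=
    Matrix.diagonal (fun i : Fin r => lam (Fin.castLE hr.le i)) with hΩ
  have hAX : A * X = X * Ω := by
    ext j i
    have h := congrFun (hX i) j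
    simp only [Matrix.mulVec, dotProduct, Pi.smul_apply, smul_eq_mul] at h
    simp [hΩ, Matrix.mul_apply, Matrix.diagonal, h, mul_comm]
  apply Polynomial.eq_of_infinite_eval_eq
  have hfin : ({t : ℂ | A.charpoly.eval t = 0} ∪ {t : ℂ | Ω.charpoly.eval t = 0}).Finite := by
    apply Set.Finite.union
    · apply Set.Finite.subset (Polynomial.rootSet_finite A.charpoly ℂ)
      intro t ht
      rw [Polynomial.mem_rootSet]
      exact ⟨A.charpoly_monic.ne_zero, by simpa using ht⟩
    · apply Set.Finite.subset (Polynomial.rootSet_finite Ω.charpoly ℂ)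
      intro t ht
      rw [Polynomial.mem_rootSet]
      exact ⟨Ω.charpoly_monic.ne_zero, by simpa using ht⟩
  apply Set.Infinite.mono _ hfin.infinite_compl
  intro t ht
  simp only [Set.mem_compl_iff, Set.mem_union, Set.mem_setOf_eq, not_or] at ht
  obtain ⟨hA0, hΩ0⟩ := ht
  set M : Matrix (Fin n) (Fin n) ℂ := t • 1 - A with hM
  set N : Matrix (Fin r) (Fin r) ℂ := t • 1 - Ω with hN
  have hMdet : IsUnit M.det := by
    rw [isUnit_iff_ne_zero]
    rw [eval_charpoly_aux] at hA0
    exact hA0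
  have hNdet : IsUnit N.det := by
    rw [isUnit_iff_ne_zero]
    rw [eval_charpoly_aux] at hΩ0
    exact hΩ0
  have hMX : M * X = X * N := by
    rw [hM, hN, Matrix.sub_mul, Matrix.mul_sub, Matrix.smul_mul, Matrix.one_mul,
      Matrix.mul_smul, Matrix.mul_one, hAX]
  have h1 : M⁻¹ * (X * N) = X := by
    rw [← hMX, ← Matrix.mul_assoc, Matrix.nonsing_inv_mul M hMdet, Matrix.one_mul]
  have h2 : M⁻¹ * X = X * N⁻¹ := by
    calc M⁻¹ * X = M⁻¹ * (X * N) * N⁻¹ := by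
          rw [← Matrix.mul_assoc, Matrix.mul_assoc (M⁻¹ * X),
            Matrix.mul_nonsing_inv N hNdet, Matrix.mul_one]
      _ = X * N⁻¹ := by rw [h1]
  simp only [Set.mem_setOf_eq, Polynomial.eval_mul, eval_charpoly_aux]
  have e1 : t • (1 : Matrix (Fin n) (Fin n) ℂ) - (A + X * C) = M - X * C := by
    rw [hM]; abel
  have e2 : t • (1 : Matrix (Fin r) (Fin r) ℂ) - (Ω + C * X) = N - C * X := by
    rw [hN]; abel
  rw [e1, e2, ← hM, ← hN]
  calc (M - X * C).det * N.det
      = (M * (1 - M⁻¹ * (X * C))).det * N.det := by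
        rw [Matrix.mul_sub, Matrix.mul_one, ← Matrix.mul_assoc,
          Matrix.mul_nonsing_inv M hMdet, Matrix.one_mul]
    _ = M.det * (1 - (M⁻¹ * X) * C).det * N.det := by
        rw [Matrix.det_mul, Matrix.mul_assoc]
    _ = M.det * (1 - C * (M⁻¹ * X)).det * N.det := by
        rw [Matrix.det_one_sub_mul_comm]
    _ = M.det * ((1 - C * X * N⁻¹) * N).det := by
        rw [h2, Matrix.det_mul, Matrix.mul_assoc, mul_assoc]
    _ = M.det * (N - C * X).det := by
        rw [Matrix.sub_mul, Matrix.one_mul, Matrix.mul_assoc,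
          Matrix.nonsing_inv_mul N hNdet, Matrix.mul_one]
end

section
/- Let A be an n×n real matrix, and set A₁₁ = (A − Aᵀ)/2 and A₁₂ = (A + Aᵀ)/2. Then the 2n×2n block matrix H = [[A₁₁, A₁₂],[A₁₂, A₁₁]] is a real Hamiltonian matrix whose characteristic polynomial over ℂ equals charpoly(A)·charpoly(−A); in particular, if Λ is the multiset of complex eigenvalues of A, then the multiset of complex eigenvalues of H is Λ ∪ (−Λ), so Λ ∪ (−Λ) is H-realizable. -/
open Matrix Polynomial

/-!
`A₁₁` is skew and `A₁₂` symmetric, which is what makes `[[A₁₁, A₁₂], [A₁₂, A₁₁]]` Hamiltonian.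
Block row and column operations with unipotent triangular factors turn `[[P, Q], [Q, P]]` into
`[[P + Q, Q], [0, P - Q]]`, here `[[A, A₁₂], [0, -Aᵀ]]`, so the characteristic polynomial is
`χ_A · χ_{-A}`. Finally `χ_{-A}(X) = ± χ_A(-X)`, whose roots are the negated roots of `χ_A`.
-/

/-- The standard symplectic matrix `J_n = [[0, I_n], [-I_n, 0]]`. -/
def symplJ (n : ℕ) : Matrix (Fin n ⊕ Fin n) (Fin n ⊕ Fin n) ℝ :=
  Matrix.fromBlocks 0 1 (-1) 0

/-- A `2n × 2n` real matrix `A` is Hamiltonian if `Aᵀ J_n + J_n A = 0`. -/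
def IsHamiltonian {n : ℕ} (A : Matrix (Fin n ⊕ Fin n) (Fin n ⊕ Fin n) ℝ) : Prop :=
  Aᵀ * symplJ n + symplJ n * A = 0

theorem isHamiltonian_fromBlocks_iff {n : ℕ} (A B C D : Matrix (Fin n) (Fin n) ℝ) :
    IsHamiltonian (fromBlocks A B C D) ↔ Bᵀ = B ∧ Cᵀ = C ∧ D = -Aᵀ := by
  rw [IsHamiltonian, symplJ, fromBlocks_transpose, fromBlocks_multiply, fromBlocks_multiply,
    fromBlocks_add, ← fromBlocks_zero, fromBlocks_inj]
  simp only [Matrix.mul_zero, Matrix.mul_one, Matrix.mul_neg, Matrix.zero_mul, Matrix.one_mul,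
    Matrix.neg_mul, zero_add, add_zero, neg_add_eq_zero]
  constructor
  · rintro ⟨hC, hAD, -, hB⟩
    exact ⟨add_neg_eq_zero.1 hB, hC, eq_neg_of_add_eq_zero_right hAD⟩
  · rintro ⟨hB, hC, rfl⟩
    simp [hB, hC]

namespace Matrix

variable {m R : Type*} [Fintype m] [DecidableEq m] [CommRing R]

theorem det_fromBlocks_circulant (P Q : Matrix m m R) :
    (fromBlocks P Q Q P).det = (P + Q).det * (P - Q).det := by
  have key : fromBlocks 1 0 (-1) 1 * fromBlocks P Q Q P * fromBlocks 1 0 1 1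
      = fromBlocks (P + Q) Q 0 (P - Q) := by
    simp only [fromBlocks_multiply]
    congr 1 <;> simp; abel
  have := congrArg det key
  rwa [det_mul, det_mul, det_fromBlocks_zero₁₂, det_fromBlocks_zero₁₂, det_fromBlocks_zero₂₁,
    det_one, one_mul, one_mul, mul_one] at this

theorem charpoly_fromBlocks_circulant (P Q : Matrix m m R) :
    (fromBlocks P Q Q P).charpoly = (P + Q).charpoly * (P - Q).charpoly := by
  rw [charpoly, charmatrix_fromBlocks, det_fromBlocks_circulant, charpoly, charpoly]
  congr 2 <;>
    simp only [charmatrix, RingHom.mapMatrix_apply, Matrix.map_add _ (map_add C),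
      Matrix.map_sub _ (map_sub C)] <;>
    abel

theorem charpoly_neg (M : Matrix m m R) :
    (-M).charpoly = (-1) ^ Fintype.card m * M.charpoly.comp (-X) := by
  have : charmatrix (-M) = -(charmatrix M).map (compRingHom (-X)) := by
    ext i j
    by_cases h : i = j
    · subst h; simp [add_comm]
    · simp [charmatrix_apply_ne _ _ _ h]
  rw [charpoly, this, det_neg]
  exact congrArg _ (RingHom.map_det _ _).symm

theorem roots_charpoly_neg [IsDomain R] (M : Matrix m m R) :
    (-M).charpoly.roots = M.charpoly.roots.map Neg.neg := by
  have hunit : (-1 : R) ^ Fintype.card m ≠ 0 := pow_ne_zero _ (neg_ne_zero.2 one_ne_zero)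
  rw [charpoly_neg, ← C_1, ← C_neg, ← C_pow, roots_C_mul _ hunit, roots_comp_neg_X]

end Matrix

/-- For a real `n × n` matrix `A`, with `A₁₁ = (A - Aᵀ)/2` and `A₁₂ = (A + Aᵀ)/2`,
the block matrix `H = [[A₁₁, A₁₂], [A₁₂, A₁₁]]` is Hamiltonian, its characteristic
polynomial over `ℂ` is `charpoly(A) * charpoly(-A)`, and its complex eigenvalue
multiset is `Λ ∪ (-Λ)`, where `Λ` is the eigenvalue multiset of `A`;
hence `Λ ∪ (-Λ)` is H-realizable. -/
theorem union_neg_spectrum_hamiltonian_realizable {n : ℕ}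
    (A A₁₁ A₁₂ : Matrix (Fin n) (Fin n) ℝ)
    (h₁₁ : A₁₁ = (1 / 2 : ℝ) • (A - Aᵀ)) (h₁₂ : A₁₂ = (1 / 2 : ℝ) • (A + Aᵀ)) :
    IsHamiltonian (Matrix.fromBlocks A₁₁ A₁₂ A₁₂ A₁₁) ∧
    ((Matrix.fromBlocks A₁₁ A₁₂ A₁₂ A₁₁).map Complex.ofReal).charpoly
      = (A.map Complex.ofReal).charpoly * ((-A).map Complex.ofReal).charpoly ∧
    ((Matrix.fromBlocks A₁₁ A₁₂ A₁₂ A₁₁).map Complex.ofReal).charpoly.roots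
      = (A.map Complex.ofReal).charpoly.roots
        + ((A.map Complex.ofReal).charpoly.roots).map (fun z => -z) := by
  have hskew : A₁₁ = -A₁₁ᵀ := by
    subst h₁₁; rw [transpose_smul, transpose_sub, transpose_transpose]; module
  have hsymm : A₁₂ᵀ = A₁₂ := by
    subst h₁₂; rw [transpose_smul, transpose_add, transpose_transpose]; module
  have hadd : A₁₁ + A₁₂ = A := by subst h₁₁ h₁₂; module
  have hsub : A₁₁ - A₁₂ = (-A)ᵀ := by subst h₁₁ h₁₂; rw [transpose_neg]; module
  have hchar : ((fromBlocks A₁₁ A₁₂ A₁₂ A₁₁).map Complex.ofReal).charpoly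
      = (A.map Complex.ofReal).charpoly * ((-A).map Complex.ofReal).charpoly := by
    have := congrArg (Polynomial.map Complex.ofRealHom) (charpoly_fromBlocks_circulant A₁₁ A₁₂)
    rwa [hadd, hsub, charpoly_transpose, Polynomial.map_mul, ← charpoly_map, ← charpoly_map,
      ← charpoly_map] at this
  refine ⟨(isHamiltonian_fromBlocks_iff _ _ _ _).2 ⟨hsymm, hsymm, hskew⟩, hchar, ?_⟩
  rw [hchar, roots_mul ((charpoly_monic _).mul (charpoly_monic _)).ne_zero,
    Matrix.map_neg _ Complex.ofReal_neg, roots_charpoly_neg]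
end

section
/- (Hamiltonian Rado theorem.) Let A be a 2n×2n real Hamiltonian matrix, let λ₁, …, λ_{2r} be real eigenvalues of A (r < n) with corresponding eigenvectors x₁, …, x_{2r}, let X be the 2n×2r matrix with i-th column xᵢ and rank(X) = 2r, let Ω = diag(λ₁,…,λ_{2r}), and let C be a 2r×2r real Hamiltonian matrix. Then A + XCX^H is a Hamiltonian matrix and its characteristic polynomial satisfies charpoly(A + XCX^H) · charpoly(Ω) = charpoly(A) · charpoly(Ω + CX^HX); equivalently, the eigenvalue multiset of A + XCX^H is obtained from that of A by replacing λ₁,…,λ_{2r} with the eigenvalues μ₁,…,μ_{2r} of Ω + CX^HX. -/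
open Matrix Polynomial

lemma symplJ_transpose (n : ℕ) : (symplJ n)ᵀ = -symplJ n := by
  simp only [symplJ, Matrix.fromBlocks_transpose, Matrix.transpose_zero, Matrix.transpose_one,
    Matrix.transpose_neg, Matrix.fromBlocks_neg]
  norm_num

lemma symplJ_mul_self (n : ℕ) : symplJ n * symplJ n = -1 := by
  rw [show (-1 : Matrix (Fin n ⊕ Fin n) (Fin n ⊕ Fin n) ℝ)
      = -(Matrix.fromBlocks 1 0 0 1) from by rw [Matrix.fromBlocks_one]]
  simp only [symplJ, Matrix.fromBlocks_multiply, Matrix.fromBlocks_neg]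
  norm_num

/-- Rado's charpoly identity. -/
lemma rado_charpoly {m k : Type*} [Fintype m] [Fintype k] [DecidableEq m] [DecidableEq k]
    (A : Matrix m m ℝ) (Y : Matrix m k ℝ) (W : Matrix k k ℝ) (B : Matrix k m ℝ)
    (h : A * Y = Y * W) :
    (A + Y * B).charpoly * W.charpoly = A.charpoly * (W + B * Y).charpoly := by
  set Cp := (Polynomial.C : ℝ →+* ℝ[X]) with hCp
  set S := charmatrix A with hS
  set T := charmatrix W with hT
  set P := Y.map Cp with hP
  set Q := B.map Cp with hQ
  have key : S * P = P * T := by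
    rw [hS, hT, charmatrix, charmatrix, Matrix.sub_mul, Matrix.mul_sub]
    have h1 : Matrix.scalar m (X : ℝ[X]) * P = P * Matrix.scalar k (X : ℝ[X]) := by
      ext i j
      simp [Matrix.scalar, Matrix.diagonal_mul, Matrix.mul_diagonal, mul_comm]
    have h2 : (Cp.mapMatrix A) * P = P * (Cp.mapMatrix W) := by
      simp only [RingHom.mapMatrix_apply, hP, ← Matrix.map_mul, h]
    rw [h1, h2]
  have hchar1 : charmatrix (A + Y * B) = S - P * Q := by
    rw [hS, charmatrix, charmatrix, RingHom.mapMatrix_apply, RingHom.mapMatrix_apply,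
      Matrix.map_add _ (map_add Cp), sub_add_eq_sub_sub, Matrix.map_mul]
  have hchar2 : charmatrix (W + B * Y) = T - Q * P := by
    rw [hT, charmatrix, charmatrix, RingHom.mapMatrix_apply, RingHom.mapMatrix_apply,
      Matrix.map_add _ (map_add Cp), sub_add_eq_sub_sub, Matrix.map_mul]
  have e1 : Matrix.fromBlocks (1 : Matrix m m ℝ[X]) P 0 1 *
      Matrix.fromBlocks (S - P * Q) 0 Q T = Matrix.fromBlocks S (P * T) Q T := by
    rw [Matrix.fromBlocks_multiply]
    congr 1 <;> simp
  have e2 : Matrix.fromBlocks S (P * T) Q T *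
      Matrix.fromBlocks (1 : Matrix m m ℝ[X]) (-P) 0 1 =
      Matrix.fromBlocks S 0 Q (T - Q * P) := by
    rw [Matrix.fromBlocks_multiply]
    congr 1 <;> simp [key, Matrix.mul_neg, sub_eq_neg_add]
  have d1 : (Matrix.fromBlocks S (P * T) Q T).det = (S - P * Q).det * T.det := by
    rw [← e1, Matrix.det_mul, Matrix.det_fromBlocks_zero₂₁, Matrix.det_fromBlocks_zero₁₂]
    simp
  have d2 : (Matrix.fromBlocks S (P * T) Q T).det = S.det * (T - Q * P).det := by
    have h3 := congrArg Matrix.det e2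
    rw [Matrix.det_mul, Matrix.det_fromBlocks_zero₂₁, Matrix.det_fromBlocks_zero₁₂] at h3
    simpa using h3
  rw [Matrix.charpoly, Matrix.charpoly, Matrix.charpoly, Matrix.charpoly, hchar1, hchar2,
    ← hS, ← hT, ← d1, d2]


/-- **Hamiltonian Rado theorem.** Let `A` be a `2n × 2n` real Hamiltonian matrix, let
`X` be a `2n × 2r` matrix (with `r < n`) of rank `2r` whose columns are eigenvectors
of `A` for the real eigenvalues `λᵢ`, let `Ω = diag(λ₁, …, λ_{2r})`, and let `C` be a
`2r × 2r` real Hamiltonian matrix. Then `A + X C X^H` is Hamiltonian (where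
`X^H = J_r Xᵀ J_n`), and its eigenvalues are obtained from those of `A` by replacing
the `λᵢ` by the eigenvalues of `Ω + C X^H X`, as expressed by the characteristic
polynomial identity
`charpoly (A + X C X^H) * charpoly Ω = charpoly A * charpoly (Ω + C X^H X)`. -/
theorem hamiltonian_rado {n r : ℕ} (hr : r < n)
    (A : Matrix (Fin n ⊕ Fin n) (Fin n ⊕ Fin n) ℝ) (hA : IsHamiltonian A)
    (lam : Fin r ⊕ Fin r → ℝ)
    (X : Matrix (Fin n ⊕ Fin n) (Fin r ⊕ Fin r) ℝ)
    (hX : ∀ i, A.mulVec (fun j => X j i) = lam i • (fun j => X j i))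
    (hrank : X.rank = 2 * r)
    (C : Matrix (Fin r ⊕ Fin r) (Fin r ⊕ Fin r) ℝ) (hC : IsHamiltonian C) :
    IsHamiltonian (A + X * C * (symplJ r * Xᵀ * symplJ n)) ∧
    (A + X * C * (symplJ r * Xᵀ * symplJ n)).charpoly * (Matrix.diagonal lam).charpoly
      = A.charpoly *
        (Matrix.diagonal lam + C * ((symplJ r * Xᵀ * symplJ n) * X)).charpoly := by
  have hAX : A * X = X * Matrix.diagonal lam := by
    ext j i
    have h4 := congrFun (hX i) j
    simp only [Matrix.mulVec, dotProduct, Pi.smul_apply, smul_eq_mul] at h4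
    rw [Matrix.mul_diagonal, Matrix.mul_apply, h4, mul_comm]
  constructor
  · unfold IsHamiltonian at hA hC ⊢
    have hCjr : symplJ r * Cᵀ + C * symplJ r = 0 := by
      have h0 := congrArg (fun M => symplJ r * M * symplJ r) hC
      simp only [Matrix.mul_add, Matrix.add_mul, Matrix.mul_zero, Matrix.zero_mul] at h0
      have h1 : symplJ r * (Cᵀ * symplJ r) * symplJ r = -(symplJ r * Cᵀ) := by
        rw [Matrix.mul_assoc, Matrix.mul_assoc, symplJ_mul_self]
        simp
      have h2 : symplJ r * (symplJ r * C) * symplJ r = -(C * symplJ r) := by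
        rw [← Matrix.mul_assoc, symplJ_mul_self]
        simp
      rw [h1, h2, ← neg_add, neg_eq_zero] at h0
      exact h0
    have expand : (A + X * C * (symplJ r * Xᵀ * symplJ n))ᵀ * symplJ n
        + symplJ n * (A + X * C * (symplJ r * Xᵀ * symplJ n))
        = (Aᵀ * symplJ n + symplJ n * A)
          + symplJ n * (X * ((symplJ r * Cᵀ + C * symplJ r) * (Xᵀ * symplJ n))) := by
      simp only [Matrix.transpose_add, Matrix.transpose_mul, Matrix.transpose_transpose,
        symplJ_transpose, Matrix.neg_mul, Matrix.mul_neg, neg_neg, Matrix.add_mul,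
        Matrix.mul_add, Matrix.mul_assoc]
      abel
    rw [expand, hA, hCjr]
    simp
  · have h5 := rado_charpoly A X (Matrix.diagonal lam) (C * (symplJ r * Xᵀ * symplJ n)) hAX
    rw [← Matrix.mul_assoc] at h5
    rw [h5, Matrix.mul_assoc]
end

section
/- Let A be an n×n real symmetric matrix with (real) eigenvalues λ₁, …, λₙ, and let α ≥ 0. Then every complex eigenvalue of the 2n×2n matrix H(α) = [[A, −αI_n],[αI_n, −Aᵀ]] lies on the imaginary axis (has zero real part) if and only if |λ_k| ≤ α for all k = 1,…,n. -/
open Matrix Polynomial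

section Aux

variable {n : ℕ}

lemma charmatrix_eq_aux (B : Matrix (Fin n) (Fin n) ℝ) :
    charmatrix B = (X : ℝ[X]) • (1 : Matrix (Fin n) (Fin n) ℝ[X]) - B.map C := by
  ext i j
  by_cases h : i = j <;>
    simp [h, Matrix.one_apply, Matrix.map_apply, Matrix.sub_apply, Matrix.smul_apply]

lemma comp_charpoly_aux (M : Matrix (Fin n) (Fin n) ℝ) (q : ℝ[X]) :
    M.charpoly.comp q = (q • (1 : Matrix (Fin n) (Fin n) ℝ[X]) - M.map C).det := by
  have h : (charmatrix M).map (eval₂RingHom C q) =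
      q • (1 : Matrix (Fin n) (Fin n) ℝ[X]) - M.map C := by
    ext i j
    by_cases hij : i = j <;>
      simp [hij, Matrix.one_apply, Matrix.map_apply, Matrix.sub_apply, Matrix.smul_apply]
  have h2 := (eval₂RingHom C q).map_det (charmatrix M)
  rw [RingHom.mapMatrix_apply, h] at h2
  rw [Matrix.charpoly]
  show eval₂ C q _ = _
  rw [← coe_eval₂RingHom]
  exact h2

lemma charpoly_fromBlocks_skew_aux (B : Matrix (Fin n) (Fin n) ℝ) (a : ℝ) :
    (fromBlocks B (-(a • (1 : Matrix (Fin n) (Fin n) ℝ))) (a • 1) (-B)).charpoly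
      = (B * B).charpoly.comp (X ^ 2 + C (a ^ 2)) := by
  classical
  set b : Matrix (Fin n) (Fin n) ℝ[X] := B.map C with hb
  set u : Matrix (Fin n) (Fin n) ℝ[X] := (X : ℝ[X]) • 1 with hu
  set v : Matrix (Fin n) (Fin n) ℝ[X] := C a • (1 : Matrix (Fin n) (Fin n) ℝ[X]) with hv
  set W : Matrix (Fin n) (Fin n) ℝ[X] :=
    (X ^ 2 + C (a ^ 2)) • (1 : Matrix (Fin n) (Fin n) ℝ[X]) - b * b with hW
  set M : Matrix (Fin n ⊕ Fin n) (Fin n ⊕ Fin n) ℝ[X] := fromBlocks (u - b) v (-v) (u + b)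
    with hM
  set N : Matrix (Fin n ⊕ Fin n) (Fin n ⊕ Fin n) ℝ[X] := fromBlocks (u + b) (-v) v (u - b)
    with hN
  set J : Matrix (Fin n ⊕ Fin n) (Fin n ⊕ Fin n) ℝ[X] := fromBlocks 0 1 1 0 with hJ
  have e12 : -((-(a • (1 : Matrix (Fin n) (Fin n) ℝ))).map C) = v := by
    ext i j; simp [hv, Matrix.map_apply, Matrix.one_apply, apply_ite, Matrix.smul_apply]
  have e21 : -(((a • (1 : Matrix (Fin n) (Fin n) ℝ))).map C) = -v := by
    ext i j; simp [hv, Matrix.map_apply, Matrix.one_apply, apply_ite, Matrix.smul_apply]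
  have e22 : charmatrix (-B) = u + b := by
    rw [charmatrix_eq_aux (-B)]
    ext i j
    simp [hb, hu, Matrix.map_apply, Matrix.sub_apply, Matrix.add_apply, Matrix.smul_apply]
  have hcm : charmatrix (fromBlocks B (-(a • (1 : Matrix (Fin n) (Fin n) ℝ))) (a • 1) (-B)) = M := by
    rw [charmatrix_fromBlocks, charmatrix_eq_aux B, e12, e21, e22, hM, hu, hb]
  have e1 : (u - b) * (u + b) + v * v = W := by
    simp only [hW]
    simp only [sub_mul, mul_add, add_mul, mul_sub, smul_mul_assoc, mul_smul_comm, one_mul,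
      mul_one, smul_smul, map_pow, hu, hv]
    module
  have e2 : (u - b) * (-v) + v * (u - b) = 0 := by
    simp only [mul_neg, sub_mul, mul_sub, smul_mul_assoc, mul_smul_comm, one_mul, mul_one,
      smul_smul, hu, hv]
    module
  have e3 : (-v) * (u + b) + (u + b) * v = 0 := by
    simp only [neg_mul, add_mul, mul_add, smul_mul_assoc, mul_smul_comm, one_mul, mul_one,
      smul_smul, hu, hv]
    module
  have e4 : (-v) * (-v) + (u + b) * (u - b) = W := by
    simp only [hW]
    simp only [neg_mul, neg_neg, sub_mul, mul_add, add_mul, mul_sub, smul_mul_assoc,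
      mul_smul_comm, one_mul, mul_one, smul_smul, map_pow, hu, hv]
    module
  have hMN : M * N = fromBlocks W 0 0 W := by
    rw [hM, hN, fromBlocks_multiply, e1, e2, e3, e4]
  have hJJ : J * J = 1 := by
    rw [hJ, fromBlocks_multiply]
    simp [← fromBlocks_one]
  have hNJ : N = J * M * J := by
    rw [hJ, hM, hN, fromBlocks_multiply, fromBlocks_multiply]
    simp
  have hdetN : N.det = M.det := by
    have hJdet : J.det * J.det = 1 := by rw [← det_mul, hJJ, det_one]
    rw [hNJ, det_mul, det_mul]
    linear_combination M.det * hJdet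
  have hsq : M.det ^ 2 = W.det ^ 2 := by
    have h1 : M.det * N.det = W.det * W.det := by
      rw [← det_mul, hMN, det_fromBlocks_zero₂₁]
    rw [hdetN] at h1
    rw [pow_two, pow_two, h1]
  have hWdet : W.det = (B * B).charpoly.comp (X ^ 2 + C (a ^ 2)) := by
    rw [comp_charpoly_aux, hW]
    congr 2
    rw [hb]
    ext i j
    simp [Matrix.map_apply, Matrix.mul_apply, map_sum]
  have hmonW : W.det.Monic := by
    rw [hWdet]
    apply (Matrix.charpoly_monic _).comp (monic_X_pow_add_C _ two_ne_zero)
    rw [natDegree_X_pow_add_C]; norm_num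
  have hchar : Matrix.charpoly
      (fromBlocks B (-(a • (1 : Matrix (Fin n) (Fin n) ℝ))) (a • 1) (-B)) = M.det := by
    rw [Matrix.charpoly, hcm]
  have hmonM : M.det.Monic := hchar ▸ Matrix.charpoly_monic _
  rw [hchar, ← hWdet]
  have h0 : (M.det - W.det) * (M.det + W.det) = 0 := by linear_combination hsq
  rcases mul_eq_zero.mp h0 with h | h
  · exact sub_eq_zero.mp h
  · exfalso
    have hMW : M.det = -W.det := eq_neg_of_add_eq_zero_left h
    have h1 : M.det.leadingCoeff = (-W.det).leadingCoeff := by rw [hMW]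
    rw [hmonM.leadingCoeff, leadingCoeff_neg, hmonW.leadingCoeff] at h1
    norm_num at h1

lemma comp_X_sq_inj_aux (u v : ℝ[X]) (h : u.comp (X ^ 2) = v.comp (X ^ 2)) : u = v := by
  have h0 : (u - v).comp (X ^ 2) = 0 := by rw [sub_comp, h, sub_self]
  rcases Polynomial.comp_eq_zero_iff.mp h0 with h1 | ⟨-, h1⟩
  · exact sub_eq_zero.mp h1
  · exfalso
    have : ((X : ℝ[X]) ^ 2).coeff 0 = 0 := by simp [coeff_X_pow]
    rw [this, map_zero] at h1
    exact pow_ne_zero 2 X_ne_zero h1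

lemma charpoly_sq_aux (B : Matrix (Fin n) (Fin n) ℝ) (l : Fin n → ℝ)
    (h : B.charpoly = ∏ k, (X - C (l k))) :
    (B * B).charpoly = ∏ k, (X - C (l k ^ 2)) := by
  classical
  set b : Matrix (Fin n) (Fin n) ℝ[X] := B.map C with hb
  set u : Matrix (Fin n) (Fin n) ℝ[X] := (X : ℝ[X]) • 1 with hu
  apply comp_X_sq_inj_aux
  have hrhs : (∏ k, ((X:ℝ[X]) - C (l k ^ 2))).comp (X ^ 2) = ∏ k, ((X:ℝ[X]) ^ 2 - C (l k ^ 2)) := by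
    rw [prod_comp]
    exact Finset.prod_congr rfl fun k _ => by rw [sub_comp, X_comp, C_comp]
  rw [hrhs, comp_charpoly_aux]
  have hbb : ((B * B).map C : Matrix (Fin n) (Fin n) ℝ[X]) = b * b := by
    rw [hb]; ext i j; simp [Matrix.map_apply, Matrix.mul_apply, map_sum]
  have hfact : (X ^ 2 : ℝ[X]) • (1 : Matrix (Fin n) (Fin n) ℝ[X]) - (B * B).map C
      = (u - b) * (u + b) := by
    rw [hbb]
    simp only [sub_mul, mul_add, smul_mul_assoc, mul_smul_comm, one_mul, mul_one, smul_smul, hu]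
    module
  rw [hfact, det_mul]
  have hdet1 : (u - b).det = B.charpoly := by
    rw [Matrix.charpoly, charmatrix_eq_aux, hu, hb]
  have hdet2 : (u + b).det = ∏ k, ((X:ℝ[X]) + C (l k)) := by
    have hcomp := comp_charpoly_aux B (-X)
    have hneg : (-X : ℝ[X]) • (1 : Matrix (Fin n) (Fin n) ℝ[X]) - B.map C = -(u + b) := by
      rw [hu, hb]; module
    rw [hneg, Matrix.det_neg, h, prod_comp] at hcomp
    have hL : ∏ k, ((X:ℝ[X]) - C (l k)).comp (-X) = (-1) ^ (Fintype.card (Fin n)) * ∏ k, ((X:ℝ[X]) + C (l k)) := by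
      rw [← Finset.card_univ, ← Finset.prod_const, ← Finset.prod_mul_distrib]
      exact Finset.prod_congr rfl fun k _ => by rw [sub_comp, X_comp, C_comp]; ring
    rw [hL] at hcomp
    have hne : ((-1 : ℝ[X]) ^ (Fintype.card (Fin n))) ≠ 0 := by
      apply pow_ne_zero; norm_num
    exact (mul_left_cancel₀ hne hcomp.symm)
  rw [hdet1, hdet2, h, ← Finset.prod_mul_distrib]
  exact Finset.prod_congr rfl fun k _ => by rw [map_pow]; ring

end Aux

/-- For a real symmetric `n × n` matrix `A` with real eigenvalues `λ₁, …, λₙ` and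
`α ≥ 0`, every complex eigenvalue of `H(α) = [[A, -αI], [αI, -Aᵀ]]` lies on the
imaginary axis if and only if `|λ_k| ≤ α` for all `k`. -/
theorem H_alpha_purely_imaginary_iff {n : ℕ} (A : Matrix (Fin n) (Fin n) ℝ)
    (hsym : Aᵀ = A)
    (lam : Fin n → ℝ)
    (heig : A.charpoly.roots = Finset.univ.val.map lam)
    (α : ℝ) (hα : 0 ≤ α) :
    (∀ μ ∈ (((Matrix.fromBlocks A (-(α • (1 : Matrix (Fin n) (Fin n) ℝ)))
          (α • (1 : Matrix (Fin n) (Fin n) ℝ)) (-Aᵀ)).map Complex.ofReal).charpoly).roots,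
        μ.re = 0)
      ↔ ∀ k, |lam k| ≤ α := by
  classical
  rw [hsym]
  -- charpoly of A as a product
  have hA : A.charpoly = ∏ k, (X - C (lam k)) := by
    have hm := A.charpoly_monic
    have hcard : A.charpoly.roots.card = A.charpoly.natDegree := by
      rw [heig, A.charpoly_natDegree_eq_dim, Multiset.card_map]
      simp
    have hp := prod_multiset_X_sub_C_of_monic_of_roots_card_eq hm hcard
    rw [heig, Multiset.map_map] at hp
    rw [← hp, Finset.prod_eq_multiset_prod]
    rfl
  -- charpoly of the real block matrix
  have key : (fromBlocks A (-(α • (1 : Matrix (Fin n) (Fin n) ℝ))) (α • 1) (-A)).charpoly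
      = ∏ k, ((X : ℝ[X]) ^ 2 - C (lam k ^ 2 - α ^ 2)) := by
    rw [charpoly_fromBlocks_skew_aux, charpoly_sq_aux A lam hA, prod_comp]
    refine Finset.prod_congr rfl fun k _ => ?_
    rw [sub_comp, X_comp, C_comp, map_sub]
    ring
  -- charpoly of the complex matrix
  have hmapC : (((fromBlocks A (-(α • (1 : Matrix (Fin n) (Fin n) ℝ)))
        (α • (1 : Matrix (Fin n) (Fin n) ℝ)) (-A)).map Complex.ofReal).charpoly)
      = ∏ k, ((X : ℂ[X]) ^ 2 - C (((lam k : ℂ)) ^ 2 - (α : ℂ) ^ 2)) := by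
    have := Matrix.charpoly_map (fromBlocks A (-(α • (1 : Matrix (Fin n) (Fin n) ℝ)))
        (α • (1 : Matrix (Fin n) (Fin n) ℝ)) (-A)) Complex.ofRealHom
    rw [show ((fromBlocks A (-(α • (1 : Matrix (Fin n) (Fin n) ℝ)))
        (α • (1 : Matrix (Fin n) (Fin n) ℝ)) (-A)).map Complex.ofReal)
      = ((fromBlocks A (-(α • (1 : Matrix (Fin n) (Fin n) ℝ)))
        (α • (1 : Matrix (Fin n) (Fin n) ℝ)) (-A)).map Complex.ofRealHom) from rfl, this, key,
      Polynomial.map_prod]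
    refine Finset.prod_congr rfl fun k _ => ?_
    rw [Polynomial.map_sub, Polynomial.map_pow, Polynomial.map_X, Polynomial.map_C]
    congr 1
    simp only [Complex.ofRealHom_eq_coe]
    push_cast
    ring
  rw [hmapC]
  -- roots of the product
  have hfacne : ∀ k : Fin n, ((X : ℂ[X]) ^ 2 - C (((lam k : ℂ)) ^ 2 - (α : ℂ) ^ 2)) ≠ 0 := by
    intro k
    have : ((X : ℂ[X]) ^ 2 - C (((lam k : ℂ)) ^ 2 - (α : ℂ) ^ 2)).Monic := by
      rw [sub_eq_add_neg, ← map_neg C]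
      exact monic_X_pow_add_C _ two_ne_zero
    exact this.ne_zero
  have hprodne : (∏ k, ((X : ℂ[X]) ^ 2 - C (((lam k : ℂ)) ^ 2 - (α : ℂ) ^ 2))) ≠ 0 :=
    Finset.prod_ne_zero_iff.mpr fun k _ => hfacne k
  rw [Polynomial.roots_prod _ _ hprodne]
  have hmem : ∀ μ : ℂ, (μ ∈ Finset.univ.val.bind fun k =>
      ((X : ℂ[X]) ^ 2 - C (((lam k : ℂ)) ^ 2 - (α : ℂ) ^ 2)).roots) ↔
      ∃ k : Fin n, μ ^ 2 = ((lam k : ℂ)) ^ 2 - (α : ℂ) ^ 2 := by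
    intro μ
    simp only [Multiset.mem_bind, Finset.mem_val, Finset.mem_univ, true_and]
    constructor
    · rintro ⟨k, hk⟩
      refine ⟨k, ?_⟩
      have := (mem_roots (hfacne k)).mp hk
      simp only [IsRoot, eval_sub, eval_pow, eval_X, eval_C] at this
      linear_combination this
    · rintro ⟨k, hk⟩
      refine ⟨k, (mem_roots (hfacne k)).mpr ?_⟩
      simp only [IsRoot, eval_sub, eval_pow, eval_X, eval_C, hk, sub_self]
  constructor
  · intro h k
    by_contra hk
    push_neg at hk
    have hpos : 0 < lam k ^ 2 - α ^ 2 := by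
      nlinarith [abs_nonneg (lam k), sq_abs (lam k)]
    set r := Real.sqrt (lam k ^ 2 - α ^ 2) with hr
    have hrpos : 0 < r := Real.sqrt_pos.mpr hpos
    have hmu : ((r : ℂ)) ^ 2 = ((lam k : ℂ)) ^ 2 - (α : ℂ) ^ 2 := by
      have h2 : r ^ 2 = lam k ^ 2 - α ^ 2 := Real.sq_sqrt hpos.le
      rw [← Complex.ofReal_pow, h2]
      push_cast
      ring
    have := h (r : ℂ) ((hmem (r : ℂ)).mpr ⟨k, hmu⟩)
    rw [Complex.ofReal_re] at this
    linarith
  · intro h μ hmu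
    obtain ⟨k, hk⟩ := (hmem μ).mp hmu
    have hle : lam k ^ 2 - α ^ 2 ≤ 0 := by
      have := h k
      nlinarith [sq_abs (lam k), abs_nonneg (lam k)]
    have hsqc : μ ^ 2 = ((lam k ^ 2 - α ^ 2 : ℝ) : ℂ) := by
      rw [hk]; push_cast; ring
    have him : μ.re * μ.im + μ.im * μ.re = 0 := by
      have : (μ ^ 2).im = 0 := by rw [hsqc, Complex.ofReal_im]
      rwa [pow_two, Complex.mul_im] at this
    have hre : μ.re * μ.re - μ.im * μ.im ≤ 0 := by
      have : (μ ^ 2).re = lam k ^ 2 - α ^ 2 := by rw [hsqc, Complex.ofReal_re]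
      rw [pow_two, Complex.mul_re] at this
      linarith
    have hprod : μ.re * μ.im = 0 := by linarith
    rcases mul_eq_zero.mp hprod with h0 | h0
    · exact h0
    · have h1 : μ.re * μ.re ≤ 0 := by rw [h0] at hre; linarith
      nlinarith [mul_self_nonneg μ.re]
end

section
/- Let A be an n×n real matrix, α a nonzero real number, and λ ∈ ℂ. Then λ is an eigenvalue of H(α) = [[A, −αI_n],[αI_n, −Aᵀ]] (over ℂ) if and only if there exists a nonzero vector x ∈ ℂⁿ with [α²I − (Aᵀ + λI)(A − λI)]x = 0; moreover, for any such x, the vector z = [αx ; (A − λI)x] ∈ ℂ^{2n} is nonzero and satisfies H(α)z = λz, i.e., z is an eigenvector of H(α) associated with λ. -/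
open Matrix Polynomial

/-- Let `A` be an `n × n` real matrix, `α` a nonzero real, and `λ ∈ ℂ`. Then `λ` is an
eigenvalue of `H(α) = [[A, -αI], [αI, -Aᵀ]]` over `ℂ` iff there is a nonzero `x ∈ ℂⁿ`
with `[α²I - (Aᵀ + λI)(A - λI)] x = 0`; moreover for any such `x`, the vector
`z = [αx ; (A - λI)x]` is nonzero and satisfies `H(α) z = λ z`, i.e. `z` is an
eigenvector of `H(α)` for `λ`. -/
theorem eigenvalue_H_alpha_iff {n : ℕ} (A : Matrix (Fin n) (Fin n) ℝ)
    (α : ℝ) (hα : α ≠ 0) (lam : ℂ) :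
    ((∃ z : Fin n ⊕ Fin n → ℂ, z ≠ 0 ∧
        ((Matrix.fromBlocks A (-(α • (1 : Matrix (Fin n) (Fin n) ℝ)))
            (α • (1 : Matrix (Fin n) (Fin n) ℝ)) (-Aᵀ)).map Complex.ofReal).mulVec z
          = lam • z) ↔
      (∃ x : Fin n → ℂ, x ≠ 0 ∧
        (((α : ℂ) ^ 2 • (1 : Matrix (Fin n) (Fin n) ℂ) -
            ((A.map Complex.ofReal)ᵀ + lam • 1) *
              ((A.map Complex.ofReal) - lam • 1)).mulVec x = 0))) ∧
    (∀ x : Fin n → ℂ, x ≠ 0 →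
      (((α : ℂ) ^ 2 • (1 : Matrix (Fin n) (Fin n) ℂ) -
          ((A.map Complex.ofReal)ᵀ + lam • 1) *
            ((A.map Complex.ofReal) - lam • 1)).mulVec x = 0) →
      Sum.elim (fun i => (α : ℂ) * x i)
          (((A.map Complex.ofReal) - lam • 1).mulVec x) ≠ 0 ∧
      ((Matrix.fromBlocks A (-(α • (1 : Matrix (Fin n) (Fin n) ℝ)))
          (α • (1 : Matrix (Fin n) (Fin n) ℝ)) (-Aᵀ)).map Complex.ofReal).mulVec
          (Sum.elim (fun i => (α : ℂ) * x i)
            (((A.map Complex.ofReal) - lam • 1).mulVec x))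
        = lam • Sum.elim (fun i => (α : ℂ) * x i)
            (((A.map Complex.ofReal) - lam • 1).mulVec x)) := by
  set B := A.map Complex.ofReal with hB
  set αc : ℂ := (α : ℂ) with hαc
  have hαc0 : αc ≠ 0 := by
    simpa [hαc] using Complex.ofReal_ne_zero.mpr hα
  have hmap : ((Matrix.fromBlocks A (-(α • (1 : Matrix (Fin n) (Fin n) ℝ)))
        (α • (1 : Matrix (Fin n) (Fin n) ℝ)) (-Aᵀ)).map Complex.ofReal)
      = Matrix.fromBlocks B (-(αc • 1)) (αc • 1) (-Bᵀ) := by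
    rw [Matrix.fromBlocks_map]
    ext i j
    cases i <;> cases j <;>
      simp [hB, hαc, Matrix.map_apply, Matrix.one_apply, apply_ite Complex.ofReal]
  have hmul : ∀ u v : Fin n → ℂ,
      ((Matrix.fromBlocks A (-(α • (1 : Matrix (Fin n) (Fin n) ℝ)))
        (α • (1 : Matrix (Fin n) (Fin n) ℝ)) (-Aᵀ)).map Complex.ofReal).mulVec (Sum.elim u v)
      = Sum.elim (B.mulVec u - αc • v) (αc • u - Bᵀ.mulVec v) := by
    intro u v
    rw [hmap, Matrix.fromBlocks_mulVec]
    simp [Matrix.neg_mulVec, Matrix.smul_mulVec, sub_eq_add_neg]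
  have hsmul : ∀ u v : Fin n → ℂ,
      lam • Sum.elim u v = Sum.elim (lam • u) (lam • v) := by
    intro u v; ext i; cases i <;> simp
  -- expand the quadratic
  have hquad : ∀ x : Fin n → ℂ,
      ((αc ^ 2 • (1 : Matrix (Fin n) (Fin n) ℂ) -
          (Bᵀ + lam • 1) * (B - lam • 1)).mulVec x
        = αc ^ 2 • x - (Bᵀ.mulVec ((B - lam • 1).mulVec x)
            + lam • ((B - lam • 1).mulVec x))) := by
    intro x
    rw [Matrix.sub_mulVec, ← Matrix.mulVec_mulVec, Matrix.add_mulVec,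
      Matrix.smul_mulVec, Matrix.smul_mulVec, Matrix.one_mulVec,
      Matrix.one_mulVec]
  have hBsub : ∀ x : Fin n → ℂ, (B - lam • 1).mulVec x = B.mulVec x - lam • x := by
    intro x
    rw [Matrix.sub_mulVec, Matrix.smul_mulVec, Matrix.one_mulVec]
  -- the "moreover" part
  have main : ∀ x : Fin n → ℂ, x ≠ 0 →
      ((αc ^ 2 • (1 : Matrix (Fin n) (Fin n) ℂ) -
          (Bᵀ + lam • 1) * (B - lam • 1)).mulVec x = 0) →
      Sum.elim (fun i => αc * x i) ((B - lam • 1).mulVec x) ≠ 0 ∧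
      ((Matrix.fromBlocks A (-(α • (1 : Matrix (Fin n) (Fin n) ℝ)))
          (α • (1 : Matrix (Fin n) (Fin n) ℝ)) (-Aᵀ)).map Complex.ofReal).mulVec
          (Sum.elim (fun i => αc * x i) ((B - lam • 1).mulVec x))
        = lam • Sum.elim (fun i => αc * x i) ((B - lam • 1).mulVec x) := by
    intro x hx0 hx
    have hax : (fun i => αc * x i) = αc • x := by ext i; simp
    have heq : αc ^ 2 • x = Bᵀ.mulVec ((B - lam • 1).mulVec x)
        + lam • ((B - lam • 1).mulVec x) := by
      have := hquad x
      rw [hx] at this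
      exact (sub_eq_zero.mp this.symm)
    constructor
    · intro h
      apply hx0
      have h1 : αc • x = 0 := by
        ext i
        have := congrFun h (Sum.inl i)
        simpa [hax] using this
      exact (smul_eq_zero.mp h1).resolve_left hαc0
    · have e1 : B.mulVec (αc • x) - αc • ((B - lam • 1).mulVec x) = lam • (αc • x) := by
        rw [Matrix.mulVec_smul, hBsub]
        module
      have e2 : αc • (αc • x) - Bᵀ.mulVec ((B - lam • 1).mulVec x)
          = lam • ((B - lam • 1).mulVec x) := by
        rw [smul_smul, ← sq, heq]
        abel
      rw [hax, hmul, hsmul, e1, e2]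
  refine ⟨⟨?_, ?_⟩, fun x hx0 hx => main x hx0 hx⟩
  · rintro ⟨z, hz0, hz⟩
    set u : Fin n → ℂ := z ∘ Sum.inl with hu
    set v : Fin n → ℂ := z ∘ Sum.inr with hv
    have hzelim : z = Sum.elim u v := by ext i; cases i <;> rfl
    rw [hzelim, hmul, hsmul] at hz
    have h1 : B.mulVec u - αc • v = lam • u := by
      ext i; exact congrFun hz (Sum.inl i)
    have h2 : αc • u - Bᵀ.mulVec v = lam • v := by
      ext i; exact congrFun hz (Sum.inr i)
    have hv' : (B - lam • 1).mulVec u = αc • v := by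
      rw [hBsub, sub_eq_iff_eq_add.mp h1]
      abel
    have hu0 : u ≠ 0 := by
      intro h
      apply hz0
      have : αc • v = 0 := by rw [← hv', h, Matrix.mulVec_zero]
      have hv0 : v = 0 := (smul_eq_zero.mp this).resolve_left hαc0
      rw [hzelim, h, hv0]
      ext i; cases i <;> simp
    refine ⟨u, hu0, ?_⟩
    rw [hquad, hv', Matrix.mulVec_smul, sub_eq_zero]
    have h2' : Bᵀ.mulVec v = αc • u - lam • v := by
      rw [sub_eq_iff_eq_add.mp h2]
      abel
    rw [h2']
    module
  · rintro ⟨x, hx0, hx⟩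
    obtain ⟨hz0, hz⟩ := main x hx0 hx
    exact ⟨_, hz0, hz⟩
end
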